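/- arXiv:1809.05117 — 2 statements merged into one kernel-verified Lean document; each statement's English description precedes it below -/
import Mathlib

section
/- Every complete 2-cap in F_3^3 has size exactly 5; in particular, every complete 2-cap in F_3^3 is maximal. -/
/-!
A 2-cap is a Sidon set, so the differences of its ordered pairs of distinct points are distinct
nonzero vectors of `F_3^3`; hence `|C| (|C| - 1) ≤ 26` and `|C| ≤ 5`. Conversely, a complete cap
with at most four points is affinely independent, so by completeness it is an affine basis
`p₀, …, p₃`. Since `4 = 1` in `F_3`, the point `p₀ + p₁ + p₂ + p₃` has all barycentric
coordinates equal to `1`; it can therefore replace any vertex of the basis, so adding it keeps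
every four points independent, contradicting completeness.
-/

def IsCap (d : ℕ) {n : ℕ} (C : Set (Fin n → ZMod 3)) : Prop :=
  ∀ s : Finset (Fin n → ZMod 3), ↑s ⊆ C → s.card ≤ d + 2 →
    AffineIndependent (ZMod 3) ((↑) : s → (Fin n → ZMod 3))

open Finset

def IsSidon {G : Type*} [Add G] (S : Set G) : Prop :=
  ∀ a ∈ S, ∀ b ∈ S, ∀ c ∈ S, ∀ d ∈ S, a + b = c + d → (a = c ∧ b = d) ∨ (a = d ∧ b = c)

/-- The differences `a - b` of distinct elements of a Sidon set are pairwise distinct. -/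
theorem IsSidon.card_mul_card_sub_one_le {G : Type*} [AddCommGroup G] [Fintype G]
    {S : Finset G} (hS : IsSidon (S : Set G)) : #S * (#S - 1) ≤ Fintype.card G - 1 := by
  classical
  have hmaps : Set.MapsTo (fun p : G × G => p.1 - p.2) S.offDiag
      ((univ.erase 0 : Finset G) : Set G) := by
    rintro ⟨a, b⟩ hab
    simpa [sub_eq_zero] using (mem_offDiag.mp hab).2.2
  have hinj : Set.InjOn (fun p : G × G => p.1 - p.2) S.offDiag := by
    rintro ⟨a, b⟩ hab ⟨c, d⟩ hcd h
    simp only [coe_offDiag, Set.mem_offDiag, mem_coe] at hab hcd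
    rcases hS a hab.1 d hcd.2.1 c hcd.1 b hab.2.1 (by simpa [sub_eq_sub_iff_add_eq_add] using h)
      with ⟨rfl, rfl⟩ | ⟨rfl, -⟩
    · rfl
    · exact absurd rfl hab.2.2
  simpa [offDiag_card, Nat.mul_sub_one, card_univ] using card_le_card_of_injOn _ hmaps hinj

theorem AffineIndependent.add_eq_add {k V : Type*} [Ring k] [AddCommGroup V] [Module k V]
    (h2 : (2 : k) ≠ 0) {s : Finset V} (hs : AffineIndependent k ((↑) : s → V))
    {a b c d : V} (ha : a ∈ s) (hb : b ∈ s) (hc : c ∈ s) (hd : d ∈ s) (h : a + b = c + d) :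
    (a = c ∧ b = d) ∨ (a = d ∧ b = c) := by
  classical
  have : Nontrivial k := nontrivial_of_ne 2 0 h2
  set w₁ : V → k := Pi.single a 1 + Pi.single b 1
  set w₂ : V → k := Pi.single c 1 + Pi.single d 1
  have hw : ∑ v ∈ s, w₁ v = ∑ v ∈ s, w₂ v := by
    simp [w₁, w₂, sum_add_distrib, sum_pi_single', ha, hb, hc, hd]
  have hwv : ∑ v ∈ s, w₁ v • v = ∑ v ∈ s, w₂ v • v := by
    simpa [w₁, w₂, add_smul, Pi.single_apply, sum_add_distrib, ha, hb, hc, hd] using h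
  have heq : w₁ = w₂ := by
    funext v
    by_cases hv : v ∈ s
    · rw [← sum_coe_sort s w₁, ← sum_coe_sort s w₂] at hw
      rw [← sum_coe_sort s (fun v => w₁ v • v), ← sum_coe_sort s (fun v => w₂ v • v)] at hwv
      exact hs.eq_of_sum_eq_sum hw hwv ⟨v, hv⟩ (mem_univ _)
    · have : v ≠ a ∧ v ≠ b ∧ v ≠ c ∧ v ≠ d := by
        refine ⟨?_, ?_, ?_, ?_⟩ <;> rintro rfl <;> contradiction
      simp [w₁, w₂, this]
  rcases (Pi.single_add_single_eq_single_add_single one_ne_zero one_ne_zero).mp heq with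
    hac | ⟨-, had, hbc⟩ | ⟨h11, -⟩
  · exact Or.inl hac
  · exact Or.inr ⟨had, hbc⟩
  · exact absurd (one_add_one_eq_two (R := k) ▸ h11) h2

theorem IsCap.isSidon {n : ℕ} {C : Set (Fin n → ZMod 3)} (hC : IsCap 2 C) : IsSidon C := by
  intro a ha b hb c hc d hd h
  have hsub : (({a, b, c, d} : Finset _) : Set (Fin n → ZMod 3)) ⊆ C := by
    simp [Set.insert_subset_iff, ha, hb, hc, hd]
  exact (hC _ hsub card_le_four).add_eq_add (by decide) (by simp) (by simp) (by simp) (by simp) h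

theorem IsCap.card_le_five {C : Finset (Fin 3 → ZMod 3)}
    (hC : IsCap 2 (C : Set (Fin 3 → ZMod 3))) : #C ≤ 5 := by
  have h := hC.isSidon.card_mul_card_sub_one_le
  simp only [Fintype.card_pi, ZMod.card, prod_const, card_univ, Fintype.card_fin] at h
  by_contra! h6
  have := Nat.mul_le_mul h6 (Nat.sub_le_sub_right h6 1)
  omega

namespace AffineBasis

variable {ι k V P : Type*} [AddCommGroup V] [AddTorsor V P]

theorem coord_sum_eq_one [Ring k] [Module k V] [Fintype ι] (b : AffineBasis ι k V)
    (h : (Fintype.card ι : k) = 1) (i : ι) : b.coord i (∑ j, b j) = 1 := by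
  have hw : ∑ _j : ι, (1 : k) = 1 := by simpa using h
  have hx : ∑ j, b j = univ.affineCombination k b (fun _ => 1) := by
    simp [univ.affineCombination_eq_linear_combination _ _ hw]
  rw [hx, b.coord_apply_combination_of_mem (mem_univ i) hw]

theorem notMem_range_of_forall_coord_ne_zero [Ring k] [Module k V] [Nontrivial ι]
    (b : AffineBasis ι k P) {x : P} (hx : ∀ i, b.coord i x ≠ 0) : x ∉ Set.range b := by
  rintro ⟨i, rfl⟩
  obtain ⟨j, hj⟩ := exists_ne i
  exact hx j (b.coord_apply_ne hj)

variable [DivisionRing k] [Module k V]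

theorem notMem_affineSpan_of_coord_ne_zero (b : AffineBasis ι k P) {i : ι} {x : P}
    (hx : b.coord i x ≠ 0) : x ∉ affineSpan k (b '' {j | j ≠ i}) := by
  have hle : affineSpan k (b '' {j | j ≠ i}) ≤ (affineSpan k {(0 : k)}).comap (b.coord i) := by
    refine affineSpan_le.mpr ?_
    rintro _ ⟨j, hj, rfl⟩
    simp [b.coord_apply_ne (Ne.symm hj)]
  exact fun hmem => hx (by simpa using hle hmem)

/-- A point with no vanishing barycentric coordinate can replace any vertex of the basis, so
`insert x (Set.range b)` is in general position. -/
theorem affineIndependent_of_subset_insert [Fintype ι] (b : AffineBasis ι k P) {x : P}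
    (hx : ∀ i, b.coord i x ≠ 0) {s : Finset P} (hs : ↑s ⊆ insert x (Set.range b))
    (hcard : #s ≤ Fintype.card ι) : AffineIndependent k ((↑) : s → P) := by
  classical
  by_cases hrange : ∀ j, b j ∈ s
  · have himage : Finset.image b univ ⊆ s := by simpa [Finset.image_subset_iff] using hrange
    have heq : Finset.image b univ = s := eq_of_subset_of_card_le himage
      (by rwa [card_image_of_injective _ b.ind.injective, card_univ])
    exact b.ind.range.mono (by simp [← heq])
  · push Not at hrange
    obtain ⟨j, hj⟩ := hrange
    have hind := b.ind.affineIndependent_update_of_notMem_affineSpan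
      (b.notMem_affineSpan_of_coord_ne_zero (hx j))
    refine hind.range.mono fun y hy => ?_
    rcases hs hy with rfl | ⟨i, rfl⟩
    · exact ⟨j, Function.update_self _ _ _⟩
    · exact ⟨i, Function.update_of_ne (by rintro rfl; exact hj hy) _ _⟩

end AffineBasis

theorem affineSpan_eq_top_of_complete {n d : ℕ} {C : Finset (Fin n → ZMod 3)}
    (hC : AffineIndependent (ZMod 3) ((↑) : C → (Fin n → ZMod 3)))
    (hcomplete : ∀ D : Finset (Fin n → ZMod 3),
      IsCap d (D : Set (Fin n → ZMod 3)) → C ⊆ D → C = D) :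
    affineSpan (ZMod 3) (C : Set (Fin n → ZMod 3)) = ⊤ := by
  obtain ⟨t, hCt, ht, hspan⟩ := exists_subset_affineIndependent_affineSpan_eq_top hC
  have hfin := t.toFinite
  have := hcomplete hfin.toFinset (fun s hs _ => ht.mono (by simpa using hs)) (by simpa using hCt)
  rwa [this, Set.Finite.coe_toFinset]

/-- Every complete 2-cap in `F_3^3` (a 2-cap not properly contained in any
larger 2-cap) has size exactly 5; in particular it is maximal. -/
theorem complete_cap_dim_three (C : Finset (Fin 3 → ZMod 3))
    (hC : IsCap 2 (C : Set (Fin 3 → ZMod 3)))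
    (hcomplete : ∀ D : Finset (Fin 3 → ZMod 3), IsCap 2 (D : Set (Fin 3 → ZMod 3)) → C ⊆ D → C = D) :
    C.card = 5 := by
  refine le_antisymm hC.card_le_five (not_lt.mp fun hlt => ?_)
  have hind : AffineIndependent (ZMod 3) ((↑) : C → (Fin 3 → ZMod 3)) :=
    hC C subset_rfl (by omega)
  let b : AffineBasis C (ZMod 3) (Fin 3 → ZMod 3) :=
    ⟨(↑), hind, by rw [Subtype.range_coe]; exact affineSpan_eq_top_of_complete hind hcomplete⟩
  have hrange : Set.range b = C := Subtype.range_coe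
  have hcard : Fintype.card C = 4 := by
    simpa using b.card_eq_finrank_add_one
  have hx : ∀ i, b.coord i (∑ j, b j) ≠ 0 := fun i => by
    rw [b.coord_sum_eq_one (by rw [hcard]; decide)]
    exact one_ne_zero
  have hcap : IsCap 2 ((insert (∑ j, b j) C : Finset _) : Set (Fin 3 → ZMod 3)) :=
    fun s hs hs4 => b.affineIndependent_of_subset_insert hx (by simpa [hrange] using hs) (by omega)
  have hmem := insert_eq_self.mp (hcomplete _ hcap (subset_insert _ C)).symm
  have : Nontrivial C := Fintype.one_lt_card_iff_nontrivial.mp (by omega)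
  exact b.notMem_range_of_forall_coord_ne_zero hx ⟨⟨_, hmem⟩, rfl⟩
end

section
/- Any two maximal 2-caps in F_3^3 (i.e., 2-caps of size 5) are affinely equivalent: there is an invertible affine transformation of F_3^3 mapping one onto the other. -/
theorem IsCap.affineIndependent {d n : ℕ} {C : Set (Fin n → ZMod 3)} (hC : IsCap d C)
    {ι : Type*} [Fintype ι] {p : ι → Fin n → ZMod 3} (hp : Function.Injective p)
    (hpC : ∀ i, p i ∈ C) (hcard : Fintype.card ι ≤ d + 2) :
    AffineIndependent (ZMod 3) p := by
  classical
  have hsub : ↑(Finset.univ.image p) ⊆ C := by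
    rw [Finset.coe_image, Finset.coe_univ, Set.image_univ]
    exact Set.range_subset_iff.2 hpC
  have hs := hC _ hsub ((Finset.card_image_of_injective _ hp).trans_le hcard)
  let f : ι ↪ Finset.univ.image p :=
    ⟨fun i => ⟨p i, Finset.mem_image_of_mem p (Finset.mem_univ i)⟩,
      fun i j h => hp (congrArg Subtype.val h)⟩
  exact hs.comp_embedding f

-- Nonzero weights are `±1`; five of them summing to `0` in `ZMod 3` contain one or four `-1`s.
set_option maxRecDepth 4000 in
theorem ZMod.exists_succAbove_eq_neg_of_sum_eq_zero :
    ∀ w : Fin 5 → ZMod 3, (∀ i, w i ≠ 0) → ∑ i, w i = 0 →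
      ∃ j, ∀ i, w (j.succAbove i) = -w j := by
  decide

theorem ne_zero_of_affineIndependent_succAbove {k V : Type*} [Ring k] [AddCommGroup V]
    [Module k V] {n : ℕ} {p : Fin (n + 1) → V}
    (hp : ∀ j : Fin (n + 1), AffineIndependent k (p ∘ j.succAbove)) {w : Fin (n + 1) → k}
    (hw : ∑ i, w i = 0) (hwp : ∑ i, w i • p i = 0) (hw_ne : ∃ i, w i ≠ 0) (j : Fin (n + 1)) :
    w j ≠ 0 := by
  intro hj
  have hw' : ∑ i, w (j.succAbove i) = 0 := by simpa [Fin.sum_univ_succAbove _ j, hj] using hw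
  have hrest : ∀ i, w (j.succAbove i) = 0 := by
    refine (affineIndependent_iff_of_fintype k _).1 (hp j) (w ∘ j.succAbove) hw' ?_
    rw [Finset.weightedVSub_eq_linear_combination (w := w ∘ j.succAbove) _ hw']
    simpa [Fin.sum_univ_succAbove _ j, hj] using hwp
  obtain ⟨i, hi⟩ := hw_ne
  exact hi (Fin.succAboveCases j hj hrest i)

theorem exists_eq_sum_succAbove_of_not_affineIndependent {V : Type*} [AddCommGroup V]
    [Module (ZMod 3) V] {p : Fin 5 → V} (hp : ¬AffineIndependent (ZMod 3) p)
    (hsub : ∀ j : Fin 5, AffineIndependent (ZMod 3) (p ∘ j.succAbove)) :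
    ∃ j, p j = ∑ i, p (j.succAbove i) := by
  simp only [affineIndependent_iff_of_fintype, not_forall, exists_prop] at hp
  obtain ⟨w, hw, hwp, i, hi⟩ := hp
  rw [Finset.weightedVSub_eq_linear_combination _ hw] at hwp
  have hne := ne_zero_of_affineIndependent_succAbove hsub hw hwp ⟨i, hi⟩
  obtain ⟨j, hj⟩ := ZMod.exists_succAbove_eq_neg_of_sum_eq_zero w hne hw
  refine ⟨j, sub_eq_zero.1 <| (smul_eq_zero.1 ?_).resolve_left (hne j)⟩
  rw [← hwp, Fin.sum_univ_succAbove _ j, smul_sub, Finset.smul_sum]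
  simp [hj, sub_eq_add_neg]

theorem AffineBasis.exists_affineEquiv_apply_eq {ι k V P V₂ P₂ : Type*} [Ring k]
    [AddCommGroup V] [Module k V] [AddTorsor V P] [AddCommGroup V₂] [Module k V₂]
    [AddTorsor V₂ P₂] (b : AffineBasis ι k P) (b₂ : AffineBasis ι k P₂) :
    ∃ T : P ≃ᵃ[k] P₂, ∀ i, T (b i) = b₂ i := by
  classical
  obtain ⟨i₀⟩ := b.nonempty
  let L := (b.basisOf i₀).equiv (b₂.basisOf i₀) (Equiv.refl _)
  refine ⟨(AffineEquiv.vaddConst k (b i₀)).symm.trans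
    (L.toAffineEquiv.trans (AffineEquiv.vaddConst k (b₂ i₀))), fun i => ?_⟩
  by_cases hi : i = i₀
  · subst hi
    simp
  · have := (b.basisOf i₀).equiv_apply ⟨i, hi⟩ (b₂.basisOf i₀) (Equiv.refl _)
    simp only [AffineBasis.basisOf_apply, Equiv.refl_apply] at this
    simp [L, this]

theorem AffineMap.map_sum_of_card_eq_one {k V V₂ ι : Type*} [Ring k] [AddCommGroup V]
    [Module k V] [AddCommGroup V₂] [Module k V₂] [Fintype ι] (f : V →ᵃ[k] V₂) (b : ι → V)
    (hcard : (Fintype.card ι : k) = 1) :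
    f (∑ i, b i) = ∑ i, f (b i) := by
  have hw : ∑ _i : ι, (1 : k) = 1 := by simpa using hcard
  have hb := Finset.univ.affineCombination_eq_linear_combination b _ hw
  have hfb := Finset.univ.affineCombination_eq_linear_combination (f ∘ b) _ hw
  simp only [one_smul] at hb hfb
  rw [← hb, Finset.map_affineCombination _ _ _ hw, hfb, Function.comp_def]

theorem IsCap.exists_affineIndependent_eq_insert_sum {C : Finset (Fin 3 → ZMod 3)}
    (hC : IsCap 2 (C : Set (Fin 3 → ZMod 3))) (h5 : C.card = 5) :
    ∃ b : Fin 4 → Fin 3 → ZMod 3, AffineIndependent (ZMod 3) b ∧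
      (C : Set (Fin 3 → ZMod 3)) = insert (∑ i, b i) (Set.range b) := by
  let e := (Finset.equivFinOfCardEq h5).symm
  let p : Fin 5 → Fin 3 → ZMod 3 := Subtype.val ∘ e
  have hp : Function.Injective p := Subtype.val_injective.comp e.injective
  have hrange : Set.range p = C := by simp [p, e.surjective.range_comp]
  have hsub (j : Fin 5) : AffineIndependent (ZMod 3) (p ∘ j.succAbove) :=
    hC.affineIndependent (hp.comp Fin.succAbove_right_injective)
      (fun i => hrange ▸ Set.mem_range_self _) (by simp)
  have hdep : ¬AffineIndependent (ZMod 3) p := fun h => by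
    have := h.card_le_finrank_succ.trans
      (Nat.add_le_add_right (Submodule.finrank_le (vectorSpan (ZMod 3) (Set.range p))) 1)
    simp at this
  obtain ⟨j, hj⟩ := exists_eq_sum_succAbove_of_not_affineIndependent hdep hsub
  refine ⟨p ∘ j.succAbove, hsub j, ?_⟩
  simp only [Function.comp_apply]
  rw [← hrange, ← hj, Set.range_comp p, Fin.range_succAbove,
    ← Set.image_insert_eq, Set.insert_eq, Set.union_compl_self, Set.image_univ]

/-- Any two maximal 2-caps in `F_3^3` (2-caps of size 5) are affinely
equivalent. -/
theorem maximal_caps_affinely_equivalent (C D : Finset (Fin 3 → ZMod 3))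
    (hC : IsCap 2 (C : Set (Fin 3 → ZMod 3))) (hD : IsCap 2 (D : Set (Fin 3 → ZMod 3)))
    (hC5 : C.card = 5) (hD5 : D.card = 5) :
    ∃ T : (Fin 3 → ZMod 3) ≃ᵃ[ZMod 3] (Fin 3 → ZMod 3), T '' (C : Set (Fin 3 → ZMod 3)) = (D : Set (Fin 3 → ZMod 3)) := by
  obtain ⟨b, hb, hCb⟩ := hC.exists_affineIndependent_eq_insert_sum hC5
  obtain ⟨b₂, hb₂, hDb₂⟩ := hD.exists_affineIndependent_eq_insert_sum hD5
  have hspan (c : Fin 4 → Fin 3 → ZMod 3) (hc : AffineIndependent (ZMod 3) c) :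
      affineSpan (ZMod 3) (Set.range c) = ⊤ :=
    hc.affineSpan_eq_top_iff_card_eq_finrank_add_one.2 (by simp)
  obtain ⟨T, hT⟩ :=
    AffineBasis.exists_affineEquiv_apply_eq ⟨b, hb, hspan b hb⟩ ⟨b₂, hb₂, hspan b₂ hb₂⟩
  replace hT : ∀ i, T (b i) = b₂ i := hT
  have hTb : ⇑T ∘ b = b₂ := funext hT
  refine ⟨T, ?_⟩
  rw [hCb, hDb₂, Set.image_insert_eq, ← Set.range_comp, hTb,
    ← T.coe_toAffineMap, T.toAffineMap.map_sum_of_card_eq_one b (by decide)]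
  simp only [T.coe_toAffineMap, hT]
end
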